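/- arXiv:nlin/0510020 — 2 statements merged into one kernel-verified Lean document; each statement's English description precedes it below -/
import Mathlib

section
/- Let u, g, ψ, P be smooth real functions on ℝ² with ψ_y = ψ_{xx} + u·ψ, g_y = −g_{xx} − u·g, P_x = g·ψ, P_y = ψ_x·g − ψ·g_x, and g nowhere vanishing. Then ψ̃ := P/g satisfies ψ̃_y = ψ̃_{xx} + ũ·ψ̃, where ũ := u + 2(g_x/g)_x. (Darboux covariance of the first Lax equation of the KPHSCS under the gauge transformation T_2[g]; a claim established in the proof of Theorem 5.2.) -/
noncomputable section

abbrev Pt2 : Type := ℝ × ℝ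

/-- partial derivative in the first coordinate `x`. -/
def px (F : Pt2 → ℝ) : Pt2 → ℝ := fun p => deriv (fun s => F (s, p.2)) p.1

/-- partial derivative in the second coordinate `y`. -/
def py (F : Pt2 → ℝ) : Pt2 → ℝ := fun p => deriv (fun s => F (p.1, s)) p.2

lemma diffx (F : Pt2 → ℝ) (hF : Differentiable ℝ F) (p : Pt2) :
    DifferentiableAt ℝ (fun s => F (s, p.2)) p.1 :=
  (hF (p.1, p.2)).comp p.1 (differentiableAt_id.prodMk (differentiableAt_const _))

lemma diffy (F : Pt2 → ℝ) (hF : Differentiable ℝ F) (p : Pt2) :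
    DifferentiableAt ℝ (fun s => F (p.1, s)) p.2 :=
  (hF (p.1, p.2)).comp p.2 ((differentiableAt_const _).prodMk differentiableAt_id)

lemma px_mul (F G : Pt2 → ℝ) (hF : Differentiable ℝ F) (hG : Differentiable ℝ G) (p : Pt2) :
    px (fun q => F q * G q) p = px F p * G p + F p * px G p :=
  deriv_mul (diffx F hF p) (diffx G hG p)

lemma px_sub (F G : Pt2 → ℝ) (hF : Differentiable ℝ F) (hG : Differentiable ℝ G) (p : Pt2) :
    px (fun q => F q - G q) p = px F p - px G p :=
  deriv_sub (diffx F hF p) (diffx G hG p)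

lemma px_div (F G : Pt2 → ℝ) (hF : Differentiable ℝ F) (hG : Differentiable ℝ G)
    (hG0 : ∀ q, G q ≠ 0) (p : Pt2) :
    px (fun q => F q / G q) p = (px F p * G p - F p * px G p) / (G p) ^ 2 :=
  deriv_div (diffx F hF p) (diffx G hG p) (hG0 (p.1, p.2))

lemma py_div (F G : Pt2 → ℝ) (hF : Differentiable ℝ F) (hG : Differentiable ℝ G)
    (hG0 : ∀ q, G q ≠ 0) (p : Pt2) :
    py (fun q => F q / G q) p = (py F p * G p - F p * py G p) / (G p) ^ 2 :=
  deriv_div (diffy F hF p) (diffy G hG p) (hG0 (p.1, p.2))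

lemma px_eq_fderiv (F : Pt2 → ℝ) (hF : Differentiable ℝ F) (p : Pt2) :
    px F p = fderiv ℝ F p ((1 : ℝ), (0 : ℝ)) := by
  have h : HasDerivAt (fun s : ℝ => ((s, p.2) : Pt2)) (1, 0) p.1 :=
    (hasDerivAt_id p.1).prodMk (hasDerivAt_const _ _)
  exact ((hF (p.1, p.2)).hasFDerivAt.comp_hasDerivAt p.1 h).deriv

lemma contDiff_px (F : Pt2 → ℝ) (hF : ContDiff ℝ (⊤ : ℕ∞) F) : ContDiff ℝ (⊤ : ℕ∞) (px F) := by
  have h : px F = fun p => fderiv ℝ F p ((1 : ℝ), (0 : ℝ)) :=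
    funext fun p => px_eq_fderiv F (hF.differentiable (by simp)) p
  rw [h]
  exact (hF.fderiv_right (by simp)).clm_apply contDiff_const

theorem kp_lax_darboux_T2 (u g ψ P : Pt2 → ℝ)
    (hu : ContDiff ℝ (⊤ : ℕ∞) u) (hg : ContDiff ℝ (⊤ : ℕ∞) g) (hψ : ContDiff ℝ (⊤ : ℕ∞) ψ)
    (hP : ContDiff ℝ (⊤ : ℕ∞) P)
    (hψeq : ∀ p : Pt2, py ψ p = px (px ψ) p + u p * ψ p)
    (hgeq : ∀ p : Pt2, py g p = -(px (px g) p) - u p * g p)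
    (hPx : ∀ p : Pt2, px P p = g p * ψ p)
    (hPy : ∀ p : Pt2, py P p = px ψ p * g p - ψ p * px g p)
    (hg0 : ∀ p : Pt2, g p ≠ 0) :
    ∀ p : Pt2,
      py (fun p' => P p' / g p') p
        = px (px (fun p' => P p' / g p')) p
          + (u p + 2 * px (fun p' => px g p' / g p') p) * (P p / g p) := by
  intro p
  have hgd := hg.differentiable (by simp)
  have hψd := hψ.differentiable (by simp)
  have hPd := hP.differentiable (by simp)
  have hgxd := (contDiff_px g hg).differentiable (by simp)
  have hgg0 : ∀ q : Pt2, g q * g q ≠ 0 := fun q => mul_ne_zero (hg0 q) (hg0 q)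
  -- first x-derivative of P/g, rewritten using hPx
  have h1 : px (fun q => P q / g q)
      = fun q => (g q * ψ q * g q - P q * px g q) / (g q * g q) := by
    funext q
    rw [px_div P g hPd hgd hg0 q, hPx q, pow_two]
  -- second x-derivative
  have hNd : Differentiable ℝ (fun q => g q * ψ q * g q - P q * px g q) :=
    ((hgd.mul hψd).mul hgd).sub (hPd.mul hgxd)
  have h2 : px (px (fun q => P q / g q)) p
      = (px (fun q => g q * ψ q * g q - P q * px g q) p * (g p * g p)
          - (g p * ψ p * g p - P p * px g p) * px (fun q => g q * g q) p)
          / (g p * g p) ^ 2 := by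
    rw [h1]
    exact px_div _ _ hNd (hgd.mul hgd) hgg0 p
  have hN : px (fun q => g q * ψ q * g q - P q * px g q) p
      = ((px g p * ψ p + g p * px ψ p) * g p + g p * ψ p * px g p)
        - (g p * ψ p * px g p + P p * px (px g) p) := by
    rw [px_sub (fun q => g q * ψ q * g q) (fun q => P q * px g q) ((hgd.mul hψd).mul hgd) (hPd.mul hgxd) p,
      px_mul (fun q => g q * ψ q) g (hgd.mul hψd) hgd p, px_mul g ψ hgd hψd p,
      px_mul P (px g) hPd hgxd p, hPx p]
  have hgg : px (fun q => g q * g q) p = px g p * g p + g p * px g p :=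
    px_mul g g hgd hgd p
  have h3 : px (fun p' => px g p' / g p') p
      = (px (px g) p * g p - px g p * px g p) / (g p) ^ 2 :=
    px_div (px g) g hgxd hgd hg0 p
  have h4 : py (fun p' => P p' / g p') p
      = (py P p * g p - P p * py g p) / (g p) ^ 2 :=
    py_div P g hPd hgd hg0 p
  rw [h4, h2, hN, hgg, h3, hPy p, hgeq p]
  have hgp := hg0 p
  field_simp
  ring
end
end

section
/- Let v, f, φ be smooth real functions on ℝ² with φ_y = φ_{xx} + 2v·φ_x, f_y = f_{xx} + 2v·f_x, and f_x nowhere vanishing. Then φ̃ := φ_x/f_x satisfies φ̃_y = φ̃_{xx} + 2ṽ·φ̃_x, where ṽ := v + f_{xx}/f_x. (Darboux covariance of the first Lax equation of the mKPHSCS under the gauge transformation G_2[f]; a claim established in the proof of Theorem 6.2.) -/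
noncomputable section

section helpers
variable {E : Type*} [NormedAddCommGroup E] [NormedSpace ℝ E]

lemma hasDerivAt_sliceX {F : Pt2 → E} (hF : Differentiable ℝ F) (p : Pt2) :
    HasDerivAt (fun s => F (s, p.2)) (fderiv ℝ F p (1, 0)) p.1 := by
  have h1 : HasDerivAt (fun s : ℝ => ((s, p.2) : Pt2)) ((1 : ℝ), (0 : ℝ)) p.1 :=
    HasDerivAt.prodMk (hasDerivAt_id p.1) (hasDerivAt_const p.1 p.2)
  have h2 : HasFDerivAt F (fderiv ℝ F p) (p.1, p.2) := by
    simpa using (hF p).hasFDerivAt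
  exact h2.comp_hasDerivAt p.1 h1

lemma hasDerivAt_sliceY {F : Pt2 → E} (hF : Differentiable ℝ F) (p : Pt2) :
    HasDerivAt (fun s => F (p.1, s)) (fderiv ℝ F p (0, 1)) p.2 := by
  have h1 : HasDerivAt (fun s : ℝ => ((p.1, s) : Pt2)) ((0 : ℝ), (1 : ℝ)) p.2 :=
    HasDerivAt.prodMk (hasDerivAt_const p.2 p.1) (hasDerivAt_id p.2)
  have h2 : HasFDerivAt F (fderiv ℝ F p) (p.1, p.2) := by
    simpa using (hF p).hasFDerivAt
  exact h2.comp_hasDerivAt p.2 h1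

end helpers

lemma px_eq {F : Pt2 → ℝ} (hF : Differentiable ℝ F) (p : Pt2) :
    px F p = fderiv ℝ F p (1, 0) := (hasDerivAt_sliceX hF p).deriv

lemma py_eq {F : Pt2 → ℝ} (hF : Differentiable ℝ F) (p : Pt2) :
    py F p = fderiv ℝ F p (0, 1) := (hasDerivAt_sliceY hF p).deriv

lemma px_hasDerivAt {F : Pt2 → ℝ} (hF : Differentiable ℝ F) (p : Pt2) :
    HasDerivAt (fun s => F (s, p.2)) (px F p) p.1 := by
  rw [px_eq hF p]; exact hasDerivAt_sliceX hF p

lemma py_hasDerivAt {F : Pt2 → ℝ} (hF : Differentiable ℝ F) (p : Pt2) :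
    HasDerivAt (fun s => F (p.1, s)) (py F p) p.2 := by
  rw [py_eq hF p]; exact hasDerivAt_sliceY hF p

lemma px_contDiff {F : Pt2 → ℝ} (hF : ContDiff ℝ (⊤ : ℕ∞) F) : ContDiff ℝ (⊤ : ℕ∞) (px F) := by
  have h : px F = fun p => fderiv ℝ F p (1, 0) :=
    funext (px_eq (hF.differentiable (by simp)))
  rw [h]
  exact (hF.fderiv_right (by simp)).clm_apply contDiff_const

lemma clairaut {F : Pt2 → ℝ} (hF : ContDiff ℝ (⊤ : ℕ∞) F) (p : Pt2) :
    px (py F) p = py (px F) p := by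
  have hd : Differentiable ℝ F := hF.differentiable (by simp)
  have hd' : Differentiable ℝ (fderiv ℝ F) := (hF.fderiv_right (m := (⊤ : ℕ∞)) (by simp)).differentiable (by simp)
  have hsymm := second_derivative_symmetric (f' := fderiv ℝ F)
      (f'' := fderiv ℝ (fderiv ℝ F) p) (fun y => (hd y).hasFDerivAt) ((hd' p).hasFDerivAt)
      ((0 : ℝ), (1 : ℝ)) ((1 : ℝ), (0 : ℝ))
  have h1 : px (py F) p = fderiv ℝ (fderiv ℝ F) p (1, 0) (0, 1) := by
    have hc : HasDerivAt (fun s => fderiv ℝ F (s, p.2)) (fderiv ℝ (fderiv ℝ F) p (1, 0)) p.1 :=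
      hasDerivAt_sliceX hd' p
    have hcl := hc.clm_apply (hasDerivAt_const p.1 ((0 : ℝ), (1 : ℝ)))
    have : px (py F) p = deriv (fun s => fderiv ℝ F (s, p.2) (0, 1)) p.1 := by
      simp only [px]
      congr 1
      funext s
      exact py_eq hd (s, p.2)
    rw [this]
    simpa using hcl.deriv
  have h2 : py (px F) p = fderiv ℝ (fderiv ℝ F) p (0, 1) (1, 0) := by
    have hc : HasDerivAt (fun s => fderiv ℝ F (p.1, s)) (fderiv ℝ (fderiv ℝ F) p (0, 1)) p.2 :=
      hasDerivAt_sliceY hd' p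
    have hcl := hc.clm_apply (hasDerivAt_const p.2 ((1 : ℝ), (0 : ℝ)))
    have : py (px F) p = deriv (fun s => fderiv ℝ F (p.1, s) (1, 0)) p.2 := by
      simp only [py]
      congr 1
      funext s
      exact px_eq hd (p.1, s)
    rw [this]
    simpa using hcl.deriv
  rw [h1, h2, hsymm]

theorem mkp_lax_darboux_G2 (v f φ : Pt2 → ℝ)
    (hv : ContDiff ℝ (⊤ : ℕ∞) v) (hf : ContDiff ℝ (⊤ : ℕ∞) f) (hφ : ContDiff ℝ (⊤ : ℕ∞) φ)
    (hφeq : ∀ p : Pt2, py φ p = px (px φ) p + 2 * v p * px φ p)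
    (hfeq : ∀ p : Pt2, py f p = px (px f) p + 2 * v p * px f p)
    (hfx0 : ∀ p : Pt2, px f p ≠ 0) :
    ∀ p : Pt2,
      py (fun p' => px φ p' / px f p') p
        = px (px (fun p' => px φ p' / px f p')) p
          + 2 * (v p + px (px f) p / px f p) * px (fun p' => px φ p' / px f p') p := by
  intro p
  have hvD : Differentiable ℝ v := hv.differentiable (by simp)
  have hu1 : ContDiff ℝ (⊤ : ℕ∞) (px φ) := px_contDiff hφ
  have hu2 : ContDiff ℝ (⊤ : ℕ∞) (px (px φ)) := px_contDiff hu1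
  have hg1 : ContDiff ℝ (⊤ : ℕ∞) (px f) := px_contDiff hf
  have hg2 : ContDiff ℝ (⊤ : ℕ∞) (px (px f)) := px_contDiff hg1
  have hu1D := hu1.differentiable (by simp)
  have hu2D := hu2.differentiable (by simp)
  have hg1D := hg1.differentiable (by simp)
  have hg2D := hg2.differentiable (by simp)
  -- x-direction slice derivatives at p
  have Hxu1 : HasDerivAt (fun s => px φ (s, p.2)) (px (px φ) p) p.1 := px_hasDerivAt hu1D p
  have Hxu2 : HasDerivAt (fun s => px (px φ) (s, p.2)) (px (px (px φ)) p) p.1 :=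
    px_hasDerivAt hu2D p
  have Hxg1 : HasDerivAt (fun s => px f (s, p.2)) (px (px f) p) p.1 := px_hasDerivAt hg1D p
  have Hxg2 : HasDerivAt (fun s => px (px f) (s, p.2)) (px (px (px f)) p) p.1 :=
    px_hasDerivAt hg2D p
  have Hxv : HasDerivAt (fun s => v (s, p.2)) (px v p) p.1 := px_hasDerivAt hvD p
  -- y-derivatives of px φ and px f, via Clairaut and the Lax equations
  have huy : py (px φ) p
      = px (px (px φ)) p + (2 * px v p * px φ p + 2 * v p * px (px φ) p) := by
    rw [← clairaut hφ p]
    have hfun : py φ = fun q => px (px φ) q + 2 * v q * px φ q := funext hφeq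
    rw [hfun]
    exact (Hxu2.add ((Hxv.const_mul 2).mul Hxu1)).deriv
  have hgy : py (px f) p
      = px (px (px f)) p + (2 * px v p * px f p + 2 * v p * px (px f) p) := by
    rw [← clairaut hf p]
    have hfun : py f = fun q => px (px f) q + 2 * v q * px f q := funext hfeq
    rw [hfun]
    exact (Hxg2.add ((Hxv.const_mul 2).mul Hxg1)).deriv
  -- LHS: py of the quotient
  have Hyu : HasDerivAt (fun s => px φ (p.1, s)) (py (px φ) p) p.2 := py_hasDerivAt hu1D p
  have Hyg : HasDerivAt (fun s => px f (p.1, s)) (py (px f) p) p.2 := py_hasDerivAt hg1D p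
  have hLHS : py (fun p' => px φ p' / px f p') p
      = (py (px φ) p * px f p - px φ p * py (px f) p) / (px f p) ^ 2 :=
    (Hyu.div Hyg (hfx0 p)).deriv
  -- px of the quotient, as a function
  have hw : ∀ q : Pt2, px (fun p' => px φ p' / px f p') q
      = (px (px φ) q * px f q - px φ q * px (px f) q) / (px f q) ^ 2 := fun q =>
    ((px_hasDerivAt hu1D q).div (px_hasDerivAt hg1D q) (hfx0 q)).deriv
  -- second x-derivative of the quotient
  have hwfun : px (fun p' => px φ p' / px f p')
      = fun q => (px (px φ) q * px f q - px φ q * px (px f) q) / (px f q) ^ 2 := funext hw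
  have HN : HasDerivAt
      (fun s => px (px φ) (s, p.2) * px f (s, p.2) - px φ (s, p.2) * px (px f) (s, p.2))
      (px (px (px φ)) p * px f p + px (px φ) p * px (px f) p
        - (px (px φ) p * px (px f) p + px φ p * px (px (px f)) p)) p.1 :=
    (Hxu2.mul Hxg1).sub (Hxu1.mul Hxg2)
  have HD : HasDerivAt (fun s => (px f (s, p.2)) ^ 2)
      ((2 : ℕ) * (px f p) ^ 1 * px (px f) p) p.1 := by
    simpa using Hxg1.fun_pow 2
  have hRHS2 : px (px (fun p' => px φ p' / px f p')) p
      = ((px (px (px φ)) p * px f p + px (px φ) p * px (px f) p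
          - (px (px φ) p * px (px f) p + px φ p * px (px (px f)) p)) * (px f p) ^ 2
        - (px (px φ) p * px f p - px φ p * px (px f) p)
            * ((2 : ℕ) * (px f p) ^ 1 * px (px f) p)) / ((px f p) ^ 2) ^ 2 := by
    rw [hwfun]
    exact (HN.div HD (pow_ne_zero 2 (hfx0 p))).deriv
  rw [hLHS, hRHS2, hw p, huy, hgy]
  have h0 := hfx0 p
  field_simp
  ring
end
end
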